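/- For every real ρ ≠ 0, let F_ρ ∈ ℝ[[z]] be the unique formal power series satisfying F_ρ(z)·G_ρ(z) = z·G_ρ'(z), where G_ρ(z) := 2·A(ρz/2). Then for every n ≥ 0 the coefficient of z^n in F_ρ equals ρ^n·a_n; in particular, the Dirac eta invariant of the (2n−1)-dimensional Berger sphere read off from Weingart's generating function is proportional to ρ^n. -/

import Mathlib

open PowerSeries

/-- Formal derivative of a real power series. -/
noncomputable def D (f : PowerSeries ℝ) : PowerSeries ℝ :=
  PowerSeries.mk fun n => ((n + 1 : ℕ) : ℝ) * PowerSeries.coeff (n + 1) f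

/-- The power series `2·sinh(t/2) = exp(t/2) − exp(−t/2)` over `ℚ`. -/
noncomputable def twoSinhHalf : PowerSeries ℚ :=
  PowerSeries.rescale (1 / 2 : ℚ) (PowerSeries.exp ℚ)
    - PowerSeries.rescale (-(1 / 2) : ℚ) (PowerSeries.exp ℚ)

/-- The Maclaurin series of `arcsinh` over `ℝ`:
`A(z) = Σ_{k≥0} (−1)^k (2k)!/(4^k (k!)² (2k+1)) z^{2k+1}`. -/
noncomputable def arsinhSeriesR : PowerSeries ℝ :=
  PowerSeries.mk fun k =>
    if Odd k then
      (-1 : ℝ) ^ (k / 2) * (Nat.factorial (k - 1) : ℝ)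
        / (4 ^ (k / 2) * (Nat.factorial (k / 2) : ℝ) ^ 2 * k)
    else 0

open Polynomial Finset
namespace WeingartAux

noncomputable section

variable (g : PowerSeries ℝ)

noncomputable def pcomp (P : PowerSeries ℝ) : PowerSeries ℝ :=
  PowerSeries.mk fun n => PowerSeries.coeff n ((P.trunc (n+1)).eval₂ (PowerSeries.C (R := ℝ)) g)

variable {g}

lemma coeff_pow_zero (hg : constantCoeff g = 0) {n m : ℕ} (h : n < m) (r : PowerSeries ℝ) :
    PowerSeries.coeff n (g ^ m * r) = 0 := by
  have hX : (PowerSeries.X : PowerSeries ℝ) ^ m ∣ g ^ m * r :=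
    dvd_mul_of_dvd_left (pow_dvd_pow_of_dvd (PowerSeries.X_dvd_iff.2 hg) m) r
  exact PowerSeries.X_pow_dvd_iff.1 hX n h

lemma coeff_eval₂ (hg : constantCoeff g = 0) (q : Polynomial ℝ) (n : ℕ) :
    PowerSeries.coeff n (q.eval₂ (PowerSeries.C (R := ℝ)) g)
      = ∑ m ∈ range (n+1), q.coeff m * PowerSeries.coeff n (g ^ m) := by
  set N := max (q.natDegree + 1) (n + 1) with hN
  have hq : q.natDegree < N := lt_of_lt_of_le (Nat.lt_succ_self _) (le_max_left _ _)
  rw [Polynomial.eval₂_eq_sum_range' (PowerSeries.C (R := ℝ)) hq g, map_sum]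
  rw [← Finset.sum_subset (Finset.range_subset_range.2 (le_max_right (q.natDegree+1) (n+1)))]
  · exact Finset.sum_congr rfl fun m _ => by rw [PowerSeries.coeff_C_mul]
  · intro m _ hm
    have hnm : n < m := by
      simp only [Finset.mem_range, not_lt] at hm
      omega
    rw [PowerSeries.coeff_C_mul, ← mul_one (g ^ m), coeff_pow_zero hg hnm, mul_zero]

lemma coeff_pcomp (hg : constantCoeff g = 0) (P : PowerSeries ℝ) (n : ℕ) :
    PowerSeries.coeff n (pcomp g P)
      = ∑ m ∈ range (n+1), PowerSeries.coeff m P * PowerSeries.coeff n (g ^ m) := by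
  rw [pcomp, PowerSeries.coeff_mk, coeff_eval₂ hg]
  refine Finset.sum_congr rfl fun m hm => ?_
  rw [PowerSeries.coeff_trunc, if_pos (Finset.mem_range.1 hm)]

lemma coeff_pcomp_eval₂ (hg : constantCoeff g = 0) (P : PowerSeries ℝ) {n N : ℕ}
    (h : n < N) :
    PowerSeries.coeff n (pcomp g P)
      = PowerSeries.coeff n ((P.trunc N).eval₂ (PowerSeries.C (R := ℝ)) g) := by
  rw [coeff_pcomp hg, coeff_eval₂ hg]
  refine Finset.sum_congr rfl fun m hm => ?_
  rw [PowerSeries.coeff_trunc, if_pos (lt_of_lt_of_le (Finset.mem_range.1 hm) (by omega))]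

/-- coefficient-of-product depends only on low coefficients -/
lemma coeff_mul_congr {A A' B B' : PowerSeries ℝ} {n : ℕ}
    (hA : ∀ m ≤ n, PowerSeries.coeff m A = PowerSeries.coeff m A')
    (hB : ∀ m ≤ n, PowerSeries.coeff m B = PowerSeries.coeff m B') :
    PowerSeries.coeff n (A * B) = PowerSeries.coeff n (A' * B') := by
  rw [PowerSeries.coeff_mul, PowerSeries.coeff_mul]
  refine Finset.sum_congr rfl fun p hp => ?_
  have h1 := Finset.HasAntidiagonal.antidiagonal.fst_le hp
  have h2 := Finset.HasAntidiagonal.antidiagonal.snd_le hp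
  rw [hA _ h1, hB _ h2]

lemma coeff_trunc_coe (P : PowerSeries ℝ) {m N : ℕ} (h : m < N) :
    PowerSeries.coeff m ((P.trunc N : Polynomial ℝ) : PowerSeries ℝ)
      = PowerSeries.coeff m P := by
  rw [Polynomial.coeff_coe, PowerSeries.coeff_trunc, if_pos h]

lemma pcomp_coe (hg : constantCoeff g = 0) (q : Polynomial ℝ) :
    pcomp g (q : PowerSeries ℝ) = q.eval₂ (PowerSeries.C (R := ℝ)) g := by
  ext n
  rw [coeff_pcomp hg, coeff_eval₂ hg]
  exact Finset.sum_congr rfl fun m _ => by rw [Polynomial.coeff_coe]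

lemma pcomp_congr {P Q : PowerSeries ℝ} (hg : constantCoeff g = 0) {n : ℕ}
    (h : ∀ m ≤ n, PowerSeries.coeff m P = PowerSeries.coeff m Q) :
    PowerSeries.coeff n (pcomp g P) = PowerSeries.coeff n (pcomp g Q) := by
  rw [coeff_pcomp hg, coeff_pcomp hg]
  exact Finset.sum_congr rfl fun m hm => by
    rw [h m (Nat.lt_succ_iff.1 (Finset.mem_range.1 hm))]

lemma coeff_pcomp_low (hg : constantCoeff g = 0) (P : PowerSeries ℝ) {n : ℕ} :
    ∀ m ≤ n, PowerSeries.coeff m (pcomp g P)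
      = PowerSeries.coeff m ((P.trunc (n+1)).eval₂ (PowerSeries.C (R := ℝ)) g) :=
  fun m hm => coeff_pcomp_eval₂ hg P (by omega)

lemma pcomp_mul (hg : constantCoeff g = 0) (P Q : PowerSeries ℝ) :
    pcomp g (P * Q) = pcomp g P * pcomp g Q := by
  ext n
  have hL : PowerSeries.coeff n (pcomp g (P * Q))
      = PowerSeries.coeff n (pcomp g
          (((P.trunc (n+1) * Q.trunc (n+1) : Polynomial ℝ)) : PowerSeries ℝ)) := by
    refine pcomp_congr hg fun m hm => ?_
    rw [Polynomial.coe_mul]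
    exact coeff_mul_congr (fun k hk => (coeff_trunc_coe P (by omega)).symm)
      (fun k hk => (coeff_trunc_coe Q (by omega)).symm) 
  have h2 : pcomp g (((P.trunc (n+1) * Q.trunc (n+1) : Polynomial ℝ)) : PowerSeries ℝ)
      = (P.trunc (n+1)).eval₂ (PowerSeries.C (R := ℝ)) g * (Q.trunc (n+1)).eval₂ (PowerSeries.C (R := ℝ)) g := by
    rw [pcomp_coe hg (P.trunc (n+1) * Q.trunc (n+1)), Polynomial.eval₂_mul]
  refine (hL.trans (congrArg (PowerSeries.coeff n) h2)).trans ?_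
  exact coeff_mul_congr (fun m hm => (coeff_pcomp_low hg P m hm).symm)
    (fun m hm => (coeff_pcomp_low hg Q m hm).symm)

lemma pcomp_add (hg : constantCoeff g = 0) (P Q : PowerSeries ℝ) :
    pcomp g (P + Q) = pcomp g P + pcomp g Q := by
  ext n
  rw [map_add, coeff_pcomp hg, coeff_pcomp hg, coeff_pcomp hg, ← Finset.sum_add_distrib]
  exact Finset.sum_congr rfl fun m _ => by rw [map_add, add_mul]

lemma pcomp_sub (hg : constantCoeff g = 0) (P Q : PowerSeries ℝ) :
    pcomp g (P - Q) = pcomp g P - pcomp g Q := by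
  ext n
  rw [map_sub, coeff_pcomp hg, coeff_pcomp hg, coeff_pcomp hg, ← Finset.sum_sub_distrib]
  exact Finset.sum_congr rfl fun m _ => by rw [map_sub, sub_mul]

lemma pcomp_C (hg : constantCoeff g = 0) (c : ℝ) :
    pcomp g (PowerSeries.C c) = PowerSeries.C c := by
  ext n
  rw [coeff_pcomp hg]
  rcases Nat.eq_zero_or_pos n with rfl | hn
  · simp
  · rw [Finset.sum_eq_zero]
    · simp [PowerSeries.coeff_C, Nat.pos_iff_ne_zero.1 hn]
    · intro m hm
      rcases Nat.eq_zero_or_pos m with rfl | hm'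
      · simp [PowerSeries.coeff_one, Nat.pos_iff_ne_zero.1 hn]
      · rw [PowerSeries.coeff_C, if_neg (by omega), zero_mul]

lemma pcomp_X (hg : constantCoeff g = 0) :
    pcomp g (PowerSeries.X : PowerSeries ℝ) = g := by
  ext n
  rw [coeff_pcomp hg]
  rcases Nat.eq_zero_or_pos n with rfl | hn
  · simpa using hg.symm
  · rw [Finset.sum_eq_single 1]
    · simp
    · intro m hm hm1
      rw [PowerSeries.coeff_X, if_neg hm1, zero_mul]
    · intro h
      exact absurd (Finset.mem_range.2 (by omega)) h

lemma pcomp_one (hg : constantCoeff g = 0) :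
    pcomp g (1 : PowerSeries ℝ) = 1 := by
  simpa using pcomp_C hg 1

lemma pcomp_pow (hg : constantCoeff g = 0) (P : PowerSeries ℝ) (k : ℕ) :
    pcomp g (P ^ k) = pcomp g P ^ k := by
  induction k with
  | zero => simpa using pcomp_one hg
  | succ k ih => rw [pow_succ, pow_succ, pcomp_mul hg, ih]

lemma eval₂_derivative (q : Polynomial ℝ) :
    d⁄dX ℝ (q.eval₂ (PowerSeries.C (R := ℝ)) g)
      = (Polynomial.derivative q).eval₂ (PowerSeries.C (R := ℝ)) g * d⁄dX ℝ g := by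
  induction q using Polynomial.induction_on' with
  | add p q hp hq =>
      rw [Polynomial.eval₂_add, map_add, hp, hq, Polynomial.derivative_add,
        Polynomial.eval₂_add, add_mul]
  | monomial m c =>
      rw [Polynomial.eval₂_monomial, Polynomial.derivative_monomial, Polynomial.eval₂_monomial]
      rw [Derivation.leibniz, PowerSeries.derivative_C, smul_zero, add_zero, Derivation.leibniz_pow]
      simp only [smul_eq_mul, nsmul_eq_mul, map_mul, map_natCast]
      ring

lemma pcomp_derivative (hg : constantCoeff g = 0) (P : PowerSeries ℝ) :
    d⁄dX ℝ (pcomp g P) = pcomp g (d⁄dX ℝ P) * d⁄dX ℝ g := by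
  ext n
  have e1 : PowerSeries.coeff n (d⁄dX ℝ (pcomp g P))
      = PowerSeries.coeff n (d⁄dX ℝ ((P.trunc (n+2)).eval₂ (PowerSeries.C (R := ℝ)) g)) := by
    rw [PowerSeries.coeff_derivative, PowerSeries.coeff_derivative,
      coeff_pcomp_eval₂ hg P (show n+1 < n+2 by omega)]
  rw [e1, eval₂_derivative]
  refine coeff_mul_congr (fun m hm => ?_) (fun m _ => rfl)
  rw [← PowerSeries.trunc_derivative P (n+1)]
  exact (coeff_pcomp_eval₂ hg (d⁄dX ℝ P) (show m < n+1 by omega)).symm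

lemma eq_C_of_derivative_eq_zero {f : PowerSeries ℝ} (h : d⁄dX ℝ f = 0) :
    f = PowerSeries.C (constantCoeff f) := by
  ext n
  cases n with
  | zero => simp
  | succ n =>
      have h2 := congrArg (PowerSeries.coeff n) h
      rw [PowerSeries.coeff_derivative, map_zero] at h2
      have h3 : PowerSeries.coeff (n+1) f = 0 := by
        have : ((n:ℝ) + 1) ≠ 0 := by positivity
        rcases mul_eq_zero.1 h2 with h4 | h4
        · exact h4
        · exact absurd h4 this
      rw [h3, PowerSeries.coeff_C, if_neg (Nat.succ_ne_zero n)]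

lemma coeff_arsinh_even {k : ℕ} (h : ¬ Odd k) : PowerSeries.coeff k arsinhSeriesR = 0 := by
  rw [arsinhSeriesR, PowerSeries.coeff_mk, if_neg h]

lemma coeff_arsinh_odd (j : ℕ) :
    PowerSeries.coeff (2*j+1) arsinhSeriesR
      = (-1 : ℝ) ^ j * (Nat.factorial (2*j) : ℝ)
        / (4 ^ j * (Nat.factorial j : ℝ) ^ 2 * (2*(j:ℝ)+1)) := by
  rw [arsinhSeriesR, PowerSeries.coeff_mk, if_pos ⟨j, by ring⟩]
  have e2 : (2*j+1)/2 = j := by omega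
  have e4 : (2*j+1) - 1 = 2*j := by omega
  rw [e2, e4]
  push_cast
  ring_nf

lemma coeff_arsinh_zero : PowerSeries.coeff 0 arsinhSeriesR = 0 :=
  coeff_arsinh_even (by simp)

lemma coeff_arsinh_one : PowerSeries.coeff 1 arsinhSeriesR = 1 := by
  have := coeff_arsinh_odd 0
  norm_num at this
  simpa using this

lemma recA (n : ℕ) :
    ((n:ℝ)+2) * ((n:ℝ)+1) * PowerSeries.coeff (n+2) arsinhSeriesR
      = -(n:ℝ)^2 * PowerSeries.coeff n arsinhSeriesR := by
  rcases Nat.even_or_odd n with he | ho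
  · rw [coeff_arsinh_even (Nat.not_odd_iff_even.2 (he.add (by decide))),
      coeff_arsinh_even (Nat.not_odd_iff_even.2 he)]
    ring
  · obtain ⟨j, rfl⟩ := ho
    have h2 : 2*j+1+2 = 2*(j+1)+1 := by ring
    rw [h2, coeff_arsinh_odd, coeff_arsinh_odd]
    have f1 : (Nat.factorial (2*(j+1)) : ℝ)
        = (2*(j:ℝ)+2) * (2*(j:ℝ)+1) * (Nat.factorial (2*j) : ℝ) := by
      have : 2*(j+1) = (2*j+1)+1 := by ring
      rw [this, Nat.factorial_succ, show 2*j+1 = (2*j)+1 from rfl, Nat.factorial_succ]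
      push_cast
      ring
    have f2 : (Nat.factorial (j+1) : ℝ) = ((j:ℝ)+1) * (Nat.factorial j : ℝ) := by
      rw [Nat.factorial_succ]; push_cast; ring
    have nz1 : (Nat.factorial j : ℝ) ≠ 0 := Nat.cast_ne_zero.2 (Nat.factorial_ne_zero j)
    have nz2 : (4 : ℝ) ^ j ≠ 0 := by positivity
    have nz3 : (2*(j:ℝ)+1) ≠ 0 := by positivity
    have nz4 : (2*(j:ℝ)+3) ≠ 0 := by positivity
    have nz5 : ((j:ℝ)+1) ≠ 0 := by positivity
    rw [f1, f2, pow_succ, pow_succ]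
    push_cast
    field_simp
    ring

/-! ### The series `g = 2·rescale (ρ/2) A` -/

noncomputable def gser (ρ : ℝ) : PowerSeries ℝ := 2 * PowerSeries.rescale (ρ/2) arsinhSeriesR

lemma coeff_two_mul (f : PowerSeries ℝ) (n : ℕ) :
    PowerSeries.coeff n (2 * f) = 2 * PowerSeries.coeff n f := by
  rw [two_mul, map_add, two_mul]

lemma coeff_gser (ρ : ℝ) (n : ℕ) :
    PowerSeries.coeff n (gser ρ) = 2 * (ρ/2)^n * PowerSeries.coeff n arsinhSeriesR := by
  rw [gser, coeff_two_mul, PowerSeries.coeff_rescale, mul_assoc]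

lemma constantCoeff_gser (ρ : ℝ) : constantCoeff (gser ρ) = 0 := by
  rw [← PowerSeries.coeff_zero_eq_constantCoeff_apply, coeff_gser, coeff_arsinh_zero, mul_zero]

lemma coeff_one_gser (ρ : ℝ) : PowerSeries.coeff 1 (gser ρ) = ρ := by
  rw [coeff_gser, coeff_arsinh_one]
  ring

lemma recg (ρ : ℝ) (n : ℕ) :
    4 * ((n:ℝ)+2) * ((n:ℝ)+1) * PowerSeries.coeff (n+2) (gser ρ)
      = -(ρ^2 * (n:ℝ)^2) * PowerSeries.coeff n (gser ρ) := by
  rw [coeff_gser, coeff_gser]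
  linear_combination (2 * ρ^2 * (ρ/2)^n) * recA n

lemma coeff_X_mul' (f : PowerSeries ℝ) (n : ℕ) :
    PowerSeries.coeff n (PowerSeries.X * f)
      = if n = 0 then 0 else PowerSeries.coeff (n-1) f := by
  cases n with
  | zero => simp
  | succ n => rw [PowerSeries.coeff_succ_X_mul, if_neg (Nat.succ_ne_zero n)]; rfl

lemma coeff_X_sq_mul (f : PowerSeries ℝ) (n : ℕ) :
    PowerSeries.coeff n (PowerSeries.X^2 * f)
      = if n < 2 then 0 else PowerSeries.coeff (n-2) f := by
  rw [PowerSeries.coeff_X_pow_mul' f 2 n]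
  split_ifs with h1 h2 h3 <;> first | rfl | omega

lemma coeff_dd (f : PowerSeries ℝ) (n : ℕ) :
    PowerSeries.coeff n (d⁄dX ℝ (d⁄dX ℝ f))
      = PowerSeries.coeff (n+2) f * ((n:ℝ)+1) * ((n:ℝ)+2) := by
  rw [PowerSeries.coeff_derivative, PowerSeries.coeff_derivative]
  push_cast
  ring

lemma ODE_g (ρ : ℝ) :
    (PowerSeries.C 4 + PowerSeries.C (ρ^2) * PowerSeries.X^2)
        * (d⁄dX ℝ (d⁄dX ℝ (gser ρ)))
      + PowerSeries.C (ρ^2) * (PowerSeries.X * d⁄dX ℝ (gser ρ)) = 0 := by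
  ext n
  rw [map_zero, map_add, add_mul, mul_assoc, map_add, PowerSeries.coeff_C_mul,
    PowerSeries.coeff_C_mul, PowerSeries.coeff_C_mul, coeff_X_mul', coeff_X_sq_mul, coeff_dd]
  match n with
  | 0 =>
      norm_num
      have := recg ρ 0
      norm_num at this
      linarith
  | 1 =>
      norm_num [PowerSeries.coeff_derivative]
      have := recg ρ 1
      norm_num at this
      linarith
  | (k+2) =>
      rw [if_neg (by omega), if_neg (by omega), coeff_dd,
        show k+2-2 = k from rfl, show k+2-1 = k+1 from rfl, PowerSeries.coeff_derivative]
      have := recg ρ (k+2)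
      push_cast
      push_cast at this
      linear_combination this

lemma sq_dg (ρ : ℝ) :
    (PowerSeries.C 4 + PowerSeries.C (ρ^2) * PowerSeries.X^2) * (d⁄dX ℝ (gser ρ))^2
      = PowerSeries.C (4*ρ^2) := by
  have hq : d⁄dX ℝ ((PowerSeries.C 4 + PowerSeries.C (ρ^2) * PowerSeries.X^2)
      * (d⁄dX ℝ (gser ρ))^2) = 0 := by
    rw [Derivation.leibniz, Derivation.leibniz_pow, map_add, PowerSeries.derivative_C,
      Derivation.leibniz, PowerSeries.derivative_C, Derivation.leibniz_pow,
      PowerSeries.derivative_X]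
    simp only [smul_eq_mul, nsmul_eq_mul, Nat.cast_ofNat, smul_zero, zero_add, zero_mul,
      mul_zero, add_zero, zero_smul, mul_one, pow_one]
    linear_combination (2 * d⁄dX ℝ (gser ρ)) * ODE_g ρ
  have h2 := eq_C_of_derivative_eq_zero hq
  have hc : constantCoeff (d⁄dX ℝ (gser ρ)) = ρ := by
    rw [← PowerSeries.coeff_zero_eq_constantCoeff_apply, PowerSeries.coeff_derivative,
      coeff_one_gser]
    norm_num
  rw [h2]
  congr 1
  simp only [map_mul, map_add, map_pow, PowerSeries.constantCoeff_C,
    PowerSeries.constantCoeff_X, hc]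
  ring

/-! ### `2 sinh(X/2)` and `2 cosh(X/2)` over `ℝ` -/

noncomputable def sR : PowerSeries ℝ :=
  PowerSeries.rescale (1/2 : ℝ) (PowerSeries.exp ℝ)
    - PowerSeries.rescale (-(1/2) : ℝ) (PowerSeries.exp ℝ)

noncomputable def cR : PowerSeries ℝ :=
  PowerSeries.rescale (1/2 : ℝ) (PowerSeries.exp ℝ)
    + PowerSeries.rescale (-(1/2) : ℝ) (PowerSeries.exp ℝ)

lemma coeff_exp' (a : ℝ) (n : ℕ) :
    PowerSeries.coeff n (PowerSeries.rescale a (PowerSeries.exp ℝ))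
      = a^n / (Nat.factorial n : ℝ) := by
  rw [PowerSeries.coeff_rescale, PowerSeries.coeff_exp]
  rw [show ((algebraMap ℚ ℝ) (1 / (Nat.factorial n : ℚ))) = 1/(Nat.factorial n : ℝ) by
    push_cast; simp]
  ring

lemma derivative_rescale_exp (a : ℝ) :
    d⁄dX ℝ (PowerSeries.rescale a (PowerSeries.exp ℝ))
      = PowerSeries.C a * PowerSeries.rescale a (PowerSeries.exp ℝ) := by
  ext n
  rw [PowerSeries.coeff_derivative, PowerSeries.coeff_C_mul, coeff_exp', coeff_exp',
    Nat.factorial_succ, pow_succ]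
  have h1 : (Nat.factorial n : ℝ) ≠ 0 := Nat.cast_ne_zero.2 (Nat.factorial_ne_zero n)
  have h2 : ((n:ℝ)+1) ≠ 0 := by positivity
  push_cast
  field_simp

lemma derivative_sR : d⁄dX ℝ sR = PowerSeries.C (1/2) * cR := by
  rw [sR, cR, map_sub, derivative_rescale_exp, derivative_rescale_exp, mul_add]
  rw [show PowerSeries.C (R := ℝ) (-(1/2)) = - PowerSeries.C (1/2) by rw [map_neg]]
  ring

lemma derivative_cR : d⁄dX ℝ cR = PowerSeries.C (1/2) * sR := by
  rw [sR, cR, map_add, derivative_rescale_exp, derivative_rescale_exp, mul_sub]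
  rw [show PowerSeries.C (R := ℝ) (-(1/2)) = - PowerSeries.C (1/2) by rw [map_neg]]
  ring

lemma constantCoeff_sR : constantCoeff sR = 0 := by
  rw [← PowerSeries.coeff_zero_eq_constantCoeff_apply, sR, map_sub, coeff_exp', coeff_exp']
  norm_num

lemma coeff_one_sR : PowerSeries.coeff 1 sR = 1 := by
  rw [sR, map_sub, coeff_exp', coeff_exp']
  norm_num

/-! ### The composite `S = sR ∘ g` equals `ρ X` -/

lemma pcomp_sR (ρ : ℝ) :
    pcomp (gser ρ) sR = PowerSeries.C ρ * PowerSeries.X := by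
  set g := gser ρ with hgdef
  have hg : constantCoeff g = 0 := constantCoeff_gser ρ
  set S := pcomp g sR with hSdef
  set Cc := pcomp g cR with hCcdef
  have dS : d⁄dX ℝ S = PowerSeries.C (1/2) * Cc * d⁄dX ℝ g := by
    rw [hSdef, pcomp_derivative hg, derivative_sR, pcomp_mul hg, pcomp_C hg]
  have dCc : d⁄dX ℝ Cc = PowerSeries.C (1/2) * S * d⁄dX ℝ g := by
    rw [hCcdef, pcomp_derivative hg, derivative_cR, pcomp_mul hg, pcomp_C hg]
  -- the second-order ODE for S
  have hODE : (PowerSeries.C 4 + PowerSeries.C (ρ^2) * PowerSeries.X^2)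
        * (d⁄dX ℝ (d⁄dX ℝ S))
      + PowerSeries.C (ρ^2) * (PowerSeries.X * d⁄dX ℝ S)
      - PowerSeries.C (ρ^2) * S = 0 := by
    have hdd : d⁄dX ℝ (d⁄dX ℝ S)
        = PowerSeries.C (1/4) * S * (d⁄dX ℝ g)^2
          + PowerSeries.C (1/2) * Cc * (d⁄dX ℝ (d⁄dX ℝ g)) := by
      rw [dS, Derivation.leibniz, Derivation.leibniz, PowerSeries.derivative_C, dCc]
      simp only [smul_eq_mul, smul_zero, mul_zero, add_zero, zero_mul, zero_add]
      have : PowerSeries.C (R := ℝ) (1/4) = PowerSeries.C (1/2) * PowerSeries.C (1/2) := by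
        rw [← map_mul]; norm_num
      rw [this]
      ring
    rw [hdd, dS]
    have h1 := sq_dg ρ
    have h2 := ODE_g ρ
    rw [← hgdef] at h1 h2
    have hc : PowerSeries.C (1/4) * PowerSeries.C (4*ρ^2) = PowerSeries.C (ρ^2) := by
      rw [← map_mul]; congr 1; ring
    linear_combination (PowerSeries.C (1/4) * S) * h1
      + (PowerSeries.C (1/2) * Cc) * h2 + S * hc
  -- coefficient recurrence for S
  have hrec : ∀ n : ℕ, 4*((n:ℝ)+2)*((n:ℝ)+1) * PowerSeries.coeff (n+2) S
      = (ρ^2 * (1 - (n:ℝ)^2)) * PowerSeries.coeff n S := by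
    intro n
    have h3 := congrArg (PowerSeries.coeff n) hODE
    rw [map_zero, map_sub, map_add, add_mul, mul_assoc, map_add, PowerSeries.coeff_C_mul,
      PowerSeries.coeff_C_mul, PowerSeries.coeff_C_mul, PowerSeries.coeff_C_mul,
      coeff_X_mul', coeff_X_sq_mul, coeff_dd] at h3
    match n, h3 with
    | 0, h3 =>
        norm_num at h3 ⊢
        linarith
    | 1, h3 =>
        norm_num [PowerSeries.coeff_derivative] at h3 ⊢
        linarith
    | (k+2), h3 =>
        rw [if_neg (by omega), if_neg (by omega), coeff_dd,
          show k+2-2 = k from rfl, show k+2-1 = k+1 from rfl,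
          PowerSeries.coeff_derivative] at h3
        push_cast at h3 ⊢
        linear_combination h3
  have hS0 : PowerSeries.coeff 0 S = 0 := by
    rw [hSdef, coeff_pcomp hg, Finset.sum_range_one,
      PowerSeries.coeff_zero_eq_constantCoeff_apply, constantCoeff_sR, zero_mul]
  have hS1 : PowerSeries.coeff 1 S = ρ := by
    rw [hSdef, coeff_pcomp hg]
    rw [Finset.sum_range_succ, Finset.sum_range_one]
    rw [PowerSeries.coeff_zero_eq_constantCoeff_apply, constantCoeff_sR, coeff_one_sR, pow_one,
      coeff_one_gser]
    ring
  ext n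
  rw [PowerSeries.coeff_C_mul]
  have key : ∀ n : ℕ, PowerSeries.coeff n S = if n = 1 then ρ else 0 := by
    intro n
    induction n using Nat.strong_induction_on with
    | _ n ih =>
      match n with
      | 0 => simpa using hS0
      | 1 => simpa using hS1
      | (k+2) =>
          have hr := hrec k
          have hk := ih k (by omega)
          rw [if_neg (by omega)]
          rcases eq_or_ne k 1 with rfl | hk1
          · rw [hk] at hr
            norm_num at hr ⊢
            linarith
          · rw [hk, if_neg hk1, mul_zero] at hr
            have h4 : (4*((k:ℝ)+2)*((k:ℝ)+1)) ≠ 0 := by positivity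
            exact (mul_eq_zero.1 hr).resolve_left h4
  rw [key n, PowerSeries.coeff_X]
  split_ifs with h <;> ring

/-! ### the unit `h` with `g = X·h` -/

noncomputable def hser (ρ : ℝ) : PowerSeries ℝ :=
  PowerSeries.mk fun n => PowerSeries.coeff (n+1) (gser ρ)

lemma X_mul_hser (ρ : ℝ) : PowerSeries.X * hser ρ = gser ρ := by
  ext n
  cases n with
  | zero =>
      rw [PowerSeries.coeff_zero_eq_constantCoeff_apply, PowerSeries.coeff_zero_eq_constantCoeff_apply,
        map_mul, PowerSeries.constantCoeff_X, zero_mul, constantCoeff_gser]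
  | succ n => rw [PowerSeries.coeff_succ_X_mul, hser, PowerSeries.coeff_mk]

lemma constantCoeff_hser (ρ : ℝ) : constantCoeff (hser ρ) = ρ := by
  rw [← PowerSeries.coeff_zero_eq_constantCoeff_apply, hser, PowerSeries.coeff_mk, coeff_one_gser]

lemma hser_unit {ρ : ℝ} (hρ : ρ ≠ 0) : hser ρ * (hser ρ)⁻¹ = 1 :=
  PowerSeries.mul_inv_cancel _ (by rw [constantCoeff_hser]; exact hρ)

lemma dg_eq (ρ : ℝ) :
    d⁄dX ℝ (gser ρ) = PowerSeries.X * d⁄dX ℝ (hser ρ) + hser ρ := by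
  rw [← X_mul_hser ρ, Derivation.leibniz, PowerSeries.derivative_X]
  simp only [smul_eq_mul, mul_one]

lemma constantCoeff_dg (ρ : ℝ) : constantCoeff (d⁄dX ℝ (gser ρ)) = ρ := by
  rw [← PowerSeries.coeff_zero_eq_constantCoeff_apply, PowerSeries.coeff_derivative,
    coeff_one_gser]
  norm_num

/-! ### residue lemmas -/

lemma key_coeff {ρ : ℝ} (hρ : ρ ≠ 0) (k : ℕ) :
    PowerSeries.coeff k (d⁄dX ℝ (gser ρ) * ((hser ρ)⁻¹)^(k+1))
      = if k = 0 then 1 else 0 := by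
  cases k with
  | zero =>
      rw [if_pos rfl, PowerSeries.coeff_zero_eq_constantCoeff_apply, map_mul, pow_one,
        constantCoeff_dg, PowerSeries.constantCoeff_inv, constantCoeff_hser]
      field_simp
  | succ j =>
      rw [if_neg (Nat.succ_ne_zero j)]
      have hh : constantCoeff (hser ρ) ≠ 0 := by rw [constantCoeff_hser]; exact hρ
      have hsplit : d⁄dX ℝ (gser ρ) * ((hser ρ)⁻¹)^(j+2)
          = PowerSeries.X * (d⁄dX ℝ (hser ρ) * ((hser ρ)⁻¹)^(j+2))
            + ((hser ρ)⁻¹)^(j+1) * (hser ρ * (hser ρ)⁻¹) := by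
        rw [dg_eq]
        ring
      rw [hsplit, hser_unit hρ, mul_one, map_add, PowerSeries.coeff_succ_X_mul]
      have hdinv : d⁄dX ℝ (((hser ρ)⁻¹)^(j+1))
          = -(((j:ℕ)+1 : ℕ) : PowerSeries ℝ)
              * (((hser ρ)⁻¹)^(j+2) * d⁄dX ℝ (hser ρ)) := by
        rw [Derivation.leibniz_pow, PowerSeries.derivative_inv']
        simp only [nsmul_eq_mul, smul_eq_mul]
        push_cast
        ring
      have hco := congrArg (PowerSeries.coeff j) hdinv
      rw [PowerSeries.coeff_derivative] at hco
      rw [← map_natCast (PowerSeries.C (R := ℝ)) (j+1), neg_mul, map_neg,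
        PowerSeries.coeff_C_mul] at hco
      -- hco : coeff (j+1) (hinv^{j+1}) * (j+1) = -( (j+1) * coeff j (hinv^{j+2} * dh) )
      have hj : ((j:ℝ)+1) ≠ 0 := by positivity
      have h7 : PowerSeries.coeff j (d⁄dX ℝ (hser ρ) * ((hser ρ)⁻¹)^(j+2))
          = - PowerSeries.coeff (j+1) (((hser ρ)⁻¹)^(j+1)) := by
        have h6 : PowerSeries.coeff j (((hser ρ)⁻¹)^(j+2) * d⁄dX ℝ (hser ρ))
            = PowerSeries.coeff j (d⁄dX ℝ (hser ρ) * ((hser ρ)⁻¹)^(j+2)) := by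
          rw [mul_comm]
        rw [h6] at hco
        apply mul_left_cancel₀ hj
        push_cast at hco ⊢
        linear_combination hco
      rw [h7]
      ring

lemma resid_mono {ρ : ℝ} (hρ : ρ ≠ 0) (m n : ℕ) :
    PowerSeries.coeff n
        (gser ρ ^ m * (d⁄dX ℝ (gser ρ) * ((hser ρ)⁻¹)^(n+1)))
      = if m = n then 1 else 0 := by
  rcases le_or_gt m n with hmn | hmn
  · obtain ⟨k, rfl⟩ : ∃ k, n = m + k := ⟨n - m, by omega⟩
    have hu : hser ρ ^ m * ((hser ρ)⁻¹)^m = 1 := by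
      rw [← mul_pow, hser_unit hρ, one_pow]
    have e : gser ρ ^ m * (d⁄dX ℝ (gser ρ) * ((hser ρ)⁻¹)^(m+k+1))
        = PowerSeries.X^m * (d⁄dX ℝ (gser ρ) * ((hser ρ)⁻¹)^(k+1)) := by
      calc gser ρ ^ m * (d⁄dX ℝ (gser ρ) * ((hser ρ)⁻¹)^(m+k+1))
          = (PowerSeries.X^m * (d⁄dX ℝ (gser ρ) * ((hser ρ)⁻¹)^(k+1)))
            * (hser ρ ^ m * ((hser ρ)⁻¹)^m) := by
            rw [← X_mul_hser ρ, mul_pow, show m+k+1 = m + (k+1) from by omega, pow_add]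
            ring
        _ = PowerSeries.X^m * (d⁄dX ℝ (gser ρ) * ((hser ρ)⁻¹)^(k+1)) := by
            rw [hu, mul_one]
    rw [e, show m+k = k+m from by omega, PowerSeries.coeff_X_pow_mul, key_coeff hρ k]
    by_cases hk : k = 0
    · subst hk; simp
    · rw [if_neg hk, if_neg (by omega)]
  · rw [coeff_pow_zero (constantCoeff_gser ρ) hmn, if_neg (by omega)]

lemma resid {ρ : ℝ} (hρ : ρ ≠ 0) (P : PowerSeries ℝ) (n : ℕ) :
    PowerSeries.coeff n
        (pcomp (gser ρ) P * (d⁄dX ℝ (gser ρ) * ((hser ρ)⁻¹)^(n+1)))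
      = PowerSeries.coeff n P := by
  have hg := constantCoeff_gser ρ
  refine (coeff_mul_congr (coeff_pcomp_low hg P) (fun m _ => rfl)).trans ?_
  rw [Polynomial.eval₂_eq_sum_range' (PowerSeries.C (R := ℝ)) (PowerSeries.natDegree_trunc_lt P n)
    (gser ρ), Finset.sum_mul, map_sum]
  have hterm : ∀ i ∈ Finset.range (n+1),
      PowerSeries.coeff n (PowerSeries.C ((P.trunc (n+1)).coeff i) * gser ρ ^ i
        * (d⁄dX ℝ (gser ρ) * ((hser ρ)⁻¹)^(n+1)))
      = if i = n then PowerSeries.coeff i P else 0 := by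
    intro i hi
    rw [mul_assoc, PowerSeries.coeff_C_mul, PowerSeries.coeff_trunc,
      if_pos (Finset.mem_range.1 hi), resid_mono hρ i n]
    split_ifs with h
    · rw [mul_one]
    · rw [mul_zero]
  rw [Finset.sum_congr rfl hterm, Finset.sum_ite_eq' (Finset.range (n+1)) n
    (fun i => PowerSeries.coeff i P), if_pos (Finset.self_mem_range_succ n)]

/-! ### `ψ = map φ` and its composite with `g` -/

lemma map_twoSinhHalf : PowerSeries.map (algebraMap ℚ ℝ) twoSinhHalf = sR := by
  ext n
  rw [PowerSeries.coeff_map, twoSinhHalf, sR, map_sub, map_sub, map_sub, coeff_exp', coeff_exp',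
    PowerSeries.coeff_rescale, PowerSeries.coeff_rescale, PowerSeries.coeff_exp]
  rw [show ∀ a : ℚ, (algebraMap ℚ ℝ) a = (a : ℝ) from fun a => eq_ratCast _ _]
  push_cast
  norm_num
  ring

lemma pcomp_psi {ρ : ℝ} (hρ : ρ ≠ 0) {φ : PowerSeries ℚ}
    (hφ : φ * twoSinhHalf = PowerSeries.X) :
    pcomp (gser ρ) (PowerSeries.map (algebraMap ℚ ℝ) φ)
      = PowerSeries.C ρ⁻¹ * hser ρ := by
  have hg := constantCoeff_gser ρ
  set ψ := PowerSeries.map (algebraMap ℚ ℝ) φ with hψdef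
  have h2 : ψ * sR = PowerSeries.X := by
    rw [hψdef, ← map_twoSinhHalf, ← map_mul, hφ, PowerSeries.map_X]
  have h3 := congrArg (pcomp (gser ρ)) h2
  rw [pcomp_mul hg, pcomp_sR ρ, pcomp_X hg] at h3
  have h4 : PowerSeries.X * (PowerSeries.C ρ * pcomp (gser ρ) ψ)
      = PowerSeries.X * hser ρ := by linear_combination h3 - X_mul_hser ρ
  have h5 := mul_left_cancel₀ PowerSeries.X_ne_zero h4
  calc pcomp (gser ρ) ψ
      = (PowerSeries.C ρ⁻¹ * PowerSeries.C ρ) * pcomp (gser ρ) ψ := by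
        rw [← map_mul, inv_mul_cancel₀ hρ, map_one, one_mul]
    _ = PowerSeries.C ρ⁻¹ * (PowerSeries.C ρ * pcomp (gser ρ) ψ) := by ring
    _ = PowerSeries.C ρ⁻¹ * hser ρ := by rw [h5]

lemma D_eq (f : PowerSeries ℝ) : D f = d⁄dX ℝ f := by
  ext n
  rw [D, PowerSeries.coeff_mk, PowerSeries.coeff_derivative]
  push_cast
  ring

end

end WeingartAux

open WeingartAux

/-- For `ρ ≠ 0`, if `F ∈ ℝ[[z]]` satisfies `F·G_ρ = z·G_ρ'` where
`G_ρ(z) = 2·arcsinh(ρz/2)`, then the `n`-th coefficient of `F` equals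
`ρ^n · a_n` with `a_n = [t^n]((t/(2 sinh(t/2)))^n)`; in particular the Dirac
eta invariant of the `(2n−1)`-dimensional Berger sphere is proportional
to `ρ^n`. -/
theorem weingart_coeff_proportional_rho
    (ρ : ℝ) (hρ : ρ ≠ 0)
    (φ : PowerSeries ℚ) (hφ : φ * twoSinhHalf = PowerSeries.X)
    (F : PowerSeries ℝ)
    (hF : F * (2 * PowerSeries.rescale (ρ / 2) arsinhSeriesR)
        = PowerSeries.X * D (2 * PowerSeries.rescale (ρ / 2) arsinhSeriesR)) :
    ∀ n : ℕ,
      PowerSeries.coeff n F = ρ ^ n * ((PowerSeries.coeff n (φ ^ n) : ℚ) : ℝ) := by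
  intro n
  have hg := constantCoeff_gser ρ
  have hF' : F * gser ρ = PowerSeries.X * d⁄dX ℝ (gser ρ) := by
    rw [show gser ρ = 2 * PowerSeries.rescale (ρ / 2) arsinhSeriesR from rfl, hF, D_eq]
  set ψ := PowerSeries.map (algebraMap ℚ ℝ) φ with hψdef
  -- F = g' · h⁻¹
  have hXFh : PowerSeries.X * (F * hser ρ) = PowerSeries.X * d⁄dX ℝ (gser ρ) := by
    rw [← hF']
    conv_rhs => rw [← X_mul_hser ρ]
    ring
  have h5 := mul_left_cancel₀ PowerSeries.X_ne_zero hXFh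
  have hFh : F = d⁄dX ℝ (gser ρ) * (hser ρ)⁻¹ := by
    calc F = F * (hser ρ * (hser ρ)⁻¹) := by rw [hser_unit hρ, mul_one]
      _ = (F * hser ρ) * (hser ρ)⁻¹ := by ring
      _ = d⁄dX ℝ (gser ρ) * (hser ρ)⁻¹ := by rw [h5]
  -- Lagrange inversion via residues
  have e1 := resid hρ (ψ^n) n
  have e2 : pcomp (gser ρ) (ψ^n) = PowerSeries.C (ρ⁻¹)^n * hser ρ^n := by
    rw [pcomp_pow hg, pcomp_psi hρ hφ, mul_pow]
  have hu : hser ρ^n * ((hser ρ)⁻¹)^n = 1 := by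
    rw [← mul_pow, hser_unit hρ, one_pow]
  have e3 : pcomp (gser ρ) (ψ^n) * (d⁄dX ℝ (gser ρ) * ((hser ρ)⁻¹)^(n+1))
      = PowerSeries.C (ρ⁻¹)^n * (d⁄dX ℝ (gser ρ) * (hser ρ)⁻¹) := by
    calc pcomp (gser ρ) (ψ^n) * (d⁄dX ℝ (gser ρ) * ((hser ρ)⁻¹)^(n+1))
        = (PowerSeries.C (ρ⁻¹)^n * (d⁄dX ℝ (gser ρ) * (hser ρ)⁻¹))
          * (hser ρ^n * ((hser ρ)⁻¹)^n) := by
          rw [e2, pow_succ]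
          ring
      _ = _ := by rw [hu, mul_one]
  rw [e3, ← map_pow, PowerSeries.coeff_C_mul, ← hFh] at e1
  -- e1 : ρ⁻¹^n * coeff n F = coeff n (ψ^n)
  have e4 : PowerSeries.coeff n (ψ^n) = ((PowerSeries.coeff n (φ^n) : ℚ) : ℝ) := by
    rw [hψdef, ← map_pow, PowerSeries.coeff_map, eq_ratCast]
  rw [e4] at e1
  rw [← e1, ← mul_assoc, ← mul_pow, mul_inv_cancel₀ hρ, one_pow, one_mul]
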